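/- The maps Λ ↦ Λ* (where Λ*(x,i) = Λ(x)Λ(a)^i) and Γ ↦ Γ_G (restriction via x ↦ (x,0)) are mutually inverse bijections between the set of representations of the n-ary group (G,f) of degree m and the set of ordinary representations of the Post cover G*_a of degree m. -/

import Mathlib

/-- An `n`-ary (polyadic) group: a set `G` with an `n`-ary operation `f`
(encoded on lists; only values on lists of length `n` are relevant) which is
associative and uniquely solvable in every position. -/
structure PolyadicGroup (n : ℕ) (G : Type*) where
  f : List G → G
  assoc : ∀ u v w u' v' w' : List G,
    v.length = n → v'.length = n →
    u.length + w.length = n - 1 → u'.length + w'.length = n - 1 →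
    u ++ v ++ w = u' ++ v' ++ w' →
    f (u ++ f v :: w) = f (u' ++ f v' :: w')
  solv : ∀ (u w : List G) (b : G), u.length + w.length = n - 1 →
    ∃! z : G, f (u ++ z :: w) = b

/-- The skew element `x̄` of `x`: the unique `z` with `f(x,...,x,z) = x`
(`x` repeated `n-1` times). -/
noncomputable def PolyadicGroup.skew {n : ℕ} {G : Type*} (P : PolyadicGroup n G)
    (x : G) : G :=
  (P.solv (List.replicate (n - 1) x) [] x (by simp)).choose

/-- `f_*`: apply `f` once (length `n`) or twice (length `2n-1`). -/
def PolyadicGroup.fstar {n : ℕ} {G : Type*} (P : PolyadicGroup n G)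
    (l : List G) : G :=
  if l.length = n then P.f l else P.f (P.f (l.take n) :: l.drop n)

/-- The Post cover multiplication on `G × ℤ_{n-1}`:
`(x,i)·(y,j) = (f_*(x, a^(i), y, a^(j), ā, a^(n-2-i*j)), i*j)` with
`i*j ≡ i+j+1 (mod n-1)`. -/
noncomputable def postMul {n : ℕ} {G : Type*} (P : PolyadicGroup n G) (a : G)
    (p q : G × ZMod (n - 1)) : G × ZMod (n - 1) :=
  (P.fstar (p.1 :: (List.replicate p.2.val a ++ q.1 ::
      (List.replicate q.2.val a ++ P.skew a ::
        List.replicate (n - 2 - (p.2 + q.2 + 1).val) a))),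
    p.2 + q.2 + 1)

/-- A degree-`m` representation of the n-ary group `(G, f)`:
`Λ(f(x_1,...,x_n)) = Λ(x_1)⋯Λ(x_n)`. -/
def IsNaryRep {n : ℕ} {G : Type*} (P : PolyadicGroup n G) {m : ℕ}
    (Λ : G → Matrix.GeneralLinearGroup (Fin m) ℂ) : Prop :=
  ∀ l : List G, l.length = n → Λ (P.f l) = (l.map Λ).prod

/-- A set of invertible matrices acts irreducibly on `ℂ^m`:
no invariant subspace other than `⊥` and `⊤`. -/
def IsIrredSet {m : ℕ} (T : Set (Matrix.GeneralLinearGroup (Fin m) ℂ)) : Prop :=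
  ∀ W : Submodule ℂ (Fin m → ℂ),
    (∀ g ∈ T, ∀ v ∈ W, Matrix.mulVec (g : Matrix (Fin m) (Fin m) ℂ) v ∈ W) →
    W = ⊥ ∨ W = ⊤

/-- `Λ* : G*_a → GL_m(ℂ)`, `Λ*(x,i) = Λ(x)Λ(a)^i`. -/
noncomputable def starRep (n : ℕ) {G : Type*} {m : ℕ} (a : G)
    (Λ : G → Matrix.GeneralLinearGroup (Fin m) ℂ) :
    G × ZMod (n - 1) → Matrix.GeneralLinearGroup (Fin m) ℂ :=
  fun p => Λ p.1 * (Λ a) ^ p.2.val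

/-!
A representation `Λ` of `(G, f)` turns the word defining a product in `G*_a` into a product of
matrices, and `Λ(ā) = Λ(a)^{-(n-2)}`, so `Λ*` is multiplicative. Conversely, the sequences
`a^s ā a^(n-2-s)` and `ā a^(n-2)` are neutral in `(G, f)`; hence in `G*_a` one has
`(x, i)(a, 0) = (x, i + 1)` and `(x₁, 0)⋯(x_n, 0) = (f(x₁, …, x_n), 0)`. The first identity
gives `Γ = (Γ_G)*`, the second says that `Γ_G` is a representation of `(G, f)`.
-/

open List

theorem List.replicate_append_cons_self {α : Type*} (t : ℕ) (a : α) (l : List α) :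
    replicate t a ++ a :: l = a :: (replicate t a ++ l) := by
  rw [← singleton_append, ← append_assoc, ← replicate_succ', replicate_succ]
  rfl

namespace PolyadicGroup

variable {n : ℕ} {G : Type*} (P : PolyadicGroup n G)

theorem f_replicate_append_skew (x : G) : P.f (replicate (n - 1) x ++ [P.skew x]) = x :=
  (P.solv (replicate (n - 1) x) [] x (by simp)).choose_spec.1

theorem eq_of_f_eq {u w : List G} (h : u.length + w.length = n - 1) {y z : G}
    (hyz : P.f (u ++ y :: w) = P.f (u ++ z :: w)) : y = z :=
  (P.solv u w _ h).unique hyz rfl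

variable (a : G)

theorem f_replicate_skew_replicate {t : ℕ} (ht : t + 1 ≤ n) :
    P.f (replicate (n - 1 - t) a ++ P.skew a :: replicate t a) = a := by
  induction t with
  | zero => simpa using P.f_replicate_append_skew a
  | succ t ih =>
    obtain ⟨k, rfl⟩ : ∃ k, n = k + t + 2 := ⟨n - t - 2, by omega⟩
    refine P.eq_of_f_eq (u := [a]) (w := replicate (k + t) a) (by grind) ?_
    calc _ = P.f ([] ++ P.f (replicate (k + 1) a ++ P.skew a :: replicate t a) ::
            replicate (k + t + 1) a) := by
          refine P.assoc _ _ _ _ _ _ (by grind) (by grind) (by grind) (by grind) ?_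
          simp [replicate_succ, replicate_append_cons_self]
      _ = _ := by
          rw [show k + t + 2 - 1 - t = k + 1 by omega] at ih
          rw [ih (by omega)]
          simp [replicate_succ]

theorem f_cons_replicate_skew_replicate (x : G) {s : ℕ} (hs : s + 2 ≤ n) :
    P.f (x :: (replicate s a ++ P.skew a :: replicate (n - 2 - s) a)) = x := by
  refine P.eq_of_f_eq (u := []) (w := replicate (n - 1) a) (by simp) ?_
  have h := P.f_replicate_skew_replicate a (t := n - 1 - s) (by omega)
  rw [show n - 1 - (n - 1 - s) = s by omega] at h
  calc _ = P.f ([x] ++ P.f (replicate s a ++ P.skew a :: replicate (n - 1 - s) a) ::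
          replicate (n - 2) a) := by
        refine P.assoc _ _ _ _ _ _ (by grind) (by grind) (by grind) (by grind) ?_
        simp only [nil_append, cons_append, append_assoc, replicate_append_replicate]
        congr 4
        omega
    _ = _ := by
        rw [h, show n - 1 = n - 2 + 1 by omega, replicate_succ]
        rfl

theorem f_cons_skew_replicate (hn : 2 ≤ n) (x : G) :
    P.f (x :: P.skew a :: replicate (n - 2) a) = x := by
  simpa using P.f_cons_replicate_skew_replicate a x (s := 0) (by omega)

theorem f_skew_replicate_append (hn : 2 ≤ n) (x : G) :
    P.f (P.skew a :: (replicate (n - 2) a ++ [x])) = x := by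
  refine P.eq_of_f_eq (u := replicate (n - 1) a) (w := []) (by simp) ?_
  calc _ = P.f ([] ++ P.f (replicate (n - 1) a ++ [P.skew a]) ::
          (replicate (n - 2) a ++ [x])) := by
        refine P.assoc _ _ _ _ _ _ (by grind) (by grind) (by grind) (by grind) ?_
        simp
    _ = _ := by
        rw [P.f_replicate_append_skew, show n - 1 = n - 2 + 1 by omega, replicate_succ]
        rfl

theorem fstar_of_length_eq {l : List G} (h : l.length = n) : P.fstar l = P.f l :=
  if_pos h

theorem fstar_append {l l' : List G} (h : l.length = n) (h' : l' ≠ []) :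
    P.fstar (l ++ l') = P.f (P.f l :: l') := by
  rw [fstar, if_neg (by simpa [h] using h'), take_left' h, drop_left' h]

theorem f_f_append_skew_replicate {c w : List G} {r s : ℕ} (y : G) (hc : c.length + r + 1 = n)
    (hrs : r + s + 2 = n) (hw : s + w.length + 2 = n) :
    P.f (P.f (c ++ P.skew a :: replicate r a) :: (replicate s a ++ y :: w)) =
      P.f (c ++ y :: w) := by
  calc _ = P.f (c ++ P.f (P.skew a :: (replicate (n - 2) a ++ [y])) :: w) := by
        refine P.assoc [] _ _ _ _ _ (by grind) (by grind) (by grind) (by grind) ?_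
        rw [show n - 2 = r + s by omega, ← replicate_append_replicate]
        simp only [nil_append, cons_append, append_assoc]
    _ = _ := by rw [P.f_skew_replicate_append a (by omega)]

end PolyadicGroup

section PostCover

variable {n : ℕ} {G : Type*} (P : PolyadicGroup n G) (a : G)

theorem postMul_natCast_zero {i : ℕ} (hi : i + 2 < n) (x y : G) :
    postMul P a (x, (i : ZMod (n - 1))) (y, 0) =
      (P.f (x :: (replicate i a ++ y :: P.skew a :: replicate (n - 3 - i) a)),
        ((i + 1 : ℕ) : ZMod (n - 1))) := by
  have hsucc : (i : ZMod (n - 1)) + 0 + 1 = ((i + 1 : ℕ) : ZMod (n - 1)) := by push_cast; ring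
  simp only [postMul, hsucc, ZMod.val_natCast_of_lt (show i < n - 1 by omega),
    ZMod.val_natCast_of_lt (show i + 1 < n - 1 by omega), ZMod.val_zero, replicate_zero,
    nil_append]
  rw [P.fstar_of_length_eq (by grind), show n - 2 - (i + 1) = n - 3 - i by omega]

theorem postMul_natCast_zero_of_add_two_eq {i : ℕ} (hi : i + 2 = n) (x y : G) :
    postMul P a (x, (i : ZMod (n - 1))) (y, 0) = (P.f (x :: (replicate i a ++ [y])), 0) := by
  have hsucc : (i : ZMod (n - 1)) + 0 + 1 = 0 := by
    rw [add_zero, ← Nat.cast_add_one, show i + 1 = n - 1 by omega, ZMod.natCast_self]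
  simp only [postMul, hsucc, ZMod.val_natCast_of_lt (show i < n - 1 by omega), ZMod.val_zero,
    replicate_zero, nil_append, Nat.sub_zero]
  have hsplit : x :: (replicate i a ++ y :: P.skew a :: replicate (n - 2) a) =
      x :: (replicate i a ++ [y]) ++ P.skew a :: replicate (n - 2) a := by simp
  rw [hsplit, P.fstar_append (by grind) (cons_ne_nil _ _), P.f_cons_skew_replicate a (by omega)]

variable {M : Type*} [Monoid M] {Γ : G × ZMod (n - 1) → M}
  (hΓ : ∀ p q, Γ (postMul P a p q) = Γ p * Γ q)
include hΓ

theorem map_natCast_of_postMul_hom {t : ℕ} (ht : t + 1 < n) (x : G) :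
    Γ (x, (t : ZMod (n - 1))) = Γ (x, 0) * Γ (a, 0) ^ t := by
  induction t with
  | zero => simp
  | succ t ih =>
    have hstep := hΓ (x, (t : ZMod (n - 1))) (a, 0)
    rw [postMul_natCast_zero P a (by omega), replicate_append_cons_self, ← cons_append,
      ← replicate_succ, show n - 3 - t = n - 2 - (t + 1) by omega,
      P.f_cons_replicate_skew_replicate a x (by omega)] at hstep
    rw [hstep, ih (by omega), pow_succ, mul_assoc]

/-- The partial product `(x, 0)(d₁, 0)⋯(d_k, 0)` in `G*_a` is `(f(x, d, ā, a^(n-2-k)), k)`. -/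
theorem map_f_skew_of_postMul_hom (x : G) {d : List G} (hd : d.length + 2 ≤ n) :
    Γ (P.f (x :: (d ++ P.skew a :: replicate (n - 2 - d.length) a)), (d.length : ZMod (n - 1))) =
      ((x :: d).map fun y => Γ (y, 0)).prod := by
  induction d using List.reverseRecOn with
  | nil => simp [P.f_cons_skew_replicate a (by omega) x]
  | append_singleton d y ih =>
    have habsorb := P.f_f_append_skew_replicate a y (c := x :: d) (r := n - 2 - d.length)
      (s := d.length) (w := P.skew a :: replicate (n - 3 - d.length) a)
      (by grind) (by grind) (by grind)
    simp only [cons_append] at habsorb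
    have hstep := hΓ (P.f (x :: (d ++ P.skew a :: replicate (n - 2 - d.length) a)),
      (d.length : ZMod (n - 1))) (y, 0)
    rw [postMul_natCast_zero P a (by grind), habsorb, ih (by grind)] at hstep
    simpa [show n - 2 - (d.length + 1) = n - 3 - d.length by omega, mul_assoc] using hstep

theorem map_f_of_postMul_hom (hn : 2 ≤ n) {l : List G} (hl : l.length = n) :
    Γ (P.f l, 0) = (l.map fun y => Γ (y, 0)).prod := by
  obtain ⟨x, e, rfl⟩ := exists_cons_of_ne_nil (ne_nil_of_length_pos (by omega) : l ≠ [])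
  obtain ⟨d, y, rfl⟩ := (eq_nil_or_concat' e).resolve_left
    (by rintro rfl; simp only [length_singleton] at hl; omega)
  have habsorb := P.f_f_append_skew_replicate a y (c := x :: d) (r := n - 2 - d.length)
    (s := d.length) (w := []) (by grind) (by grind) (by grind)
  have hstep := hΓ (P.f (x :: (d ++ P.skew a :: replicate (n - 2 - d.length) a)),
    (d.length : ZMod (n - 1))) (y, 0)
  simp only [cons_append] at habsorb
  rw [postMul_natCast_zero_of_add_two_eq P a (by grind), habsorb,
    map_f_skew_of_postMul_hom P a hΓ x (by grind)] at hstep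
  simpa [mul_assoc] using hstep

end PostCover

namespace IsNaryRep

variable {n : ℕ} {G : Type*} {P : PolyadicGroup n G} {m : ℕ}
  {Λ : G → Matrix.GeneralLinearGroup (Fin m) ℂ} (hΛ : IsNaryRep P Λ)
include hΛ

theorem map_fstar {l : List G} (hl : l.length = n ∨ l.length = 2 * n - 1) :
    Λ (P.fstar l) = (l.map Λ).prod := by
  by_cases h : l.length = n
  · rw [P.fstar_of_length_eq h, hΛ l h]
  · rw [PolyadicGroup.fstar, if_neg h, hΛ _ (by grind), map_cons, prod_cons,
      hΛ _ (by grind), ← prod_append, ← map_append, take_append_drop]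

theorem map_skew_mul_pow (hn : 2 ≤ n) (a : G) : Λ (P.skew a) * Λ a ^ (n - 2) = 1 := by
  have h := congrArg Λ (P.f_replicate_append_skew a)
  rw [hΛ _ (by grind), map_append, map_replicate, prod_append, prod_replicate, map_singleton,
    prod_singleton, show n - 1 = 1 + (n - 2) by omega, pow_add, pow_one, mul_assoc,
    mul_eq_left] at h
  exact mul_eq_one_comm.mp h

theorem starRep_postMul (hn : 2 ≤ n) (a : G) (p q : G × ZMod (n - 1)) :
    starRep n a Λ (postMul P a p q) = starRep n a Λ p * starRep n a Λ q := by
  have : NeZero (n - 1) := ⟨by omega⟩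
  obtain ⟨x, i⟩ := p
  obtain ⟨y, j⟩ := q
  have hi := ZMod.val_lt i
  have hj := ZMod.val_lt j
  have hk : (i + j + 1).val = (i.val + j.val + 1) % (n - 1) := by
    rw [← ZMod.val_natCast]; push_cast [ZMod.natCast_zmod_val]; rfl
  have hkn : (i + j + 1).val ≤ n - 2 := by have := ZMod.val_lt (i + j + 1); omega
  have hlen : i.val + j.val + 3 + (n - 2 - (i + j + 1).val) = n ∨
      i.val + j.val + 3 + (n - 2 - (i + j + 1).val) = 2 * n - 1 := by
    rcases Nat.lt_or_ge (i.val + j.val + 1) (n - 1) with h | h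
    · rw [Nat.mod_eq_of_lt h] at hk; omega
    · rw [Nat.mod_eq_sub_mod h, Nat.mod_eq_of_lt (by omega)] at hk; omega
  simp only [starRep, postMul]
  rw [hΛ.map_fstar (by grind)]
  simp only [map_cons, map_append, map_replicate, prod_cons, prod_append, prod_replicate,
    mul_assoc, ← pow_add, show n - 2 - (i + j + 1).val + (i + j + 1).val = n - 2 by omega]
  rw [hΛ.map_skew_mul_pow hn, mul_one]

end IsNaryRep

section Restriction

variable {n : ℕ} {G : Type*} (P : PolyadicGroup n G) (a : G) {m : ℕ}
  {Γ : G × ZMod (n - 1) → Matrix.GeneralLinearGroup (Fin m) ℂ}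
  (hΓ : ∀ p q, Γ (postMul P a p q) = Γ p * Γ q)
include hΓ

theorem starRep_restrict (hn : 2 ≤ n) (p : G × ZMod (n - 1)) :
    starRep n a (fun x => Γ (x, 0)) p = Γ p := by
  have : NeZero (n - 1) := ⟨by omega⟩
  have h := map_natCast_of_postMul_hom P a hΓ (t := p.2.val)
    (by have := ZMod.val_lt p.2; omega) p.1
  rwa [ZMod.natCast_zmod_val, eq_comm] at h

end Restriction

/-- `Λ ↦ Λ*` and `Γ ↦ Γ_G` are mutually inverse bijections between the
degree-`m` representations of `(G,f)` and those of the Post cover `G*_a`. -/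
theorem star_restriction_inverse {n : ℕ} {G : Type*} (hn : 2 ≤ n)
    (P : PolyadicGroup n G) (a : G) {m : ℕ} :
    (∀ Λ : G → Matrix.GeneralLinearGroup (Fin m) ℂ, IsNaryRep P Λ →
      (∀ p q : G × ZMod (n - 1),
        starRep n a Λ (postMul P a p q) = starRep n a Λ p * starRep n a Λ q) ∧
      (∀ x : G, starRep n a Λ (x, 0) = Λ x)) ∧
    (∀ Γ : G × ZMod (n - 1) → Matrix.GeneralLinearGroup (Fin m) ℂ,
      (∀ p q : G × ZMod (n - 1), Γ (postMul P a p q) = Γ p * Γ q) →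
      IsNaryRep P (fun x : G => Γ (x, 0)) ∧
      (∀ p : G × ZMod (n - 1), starRep n a (fun x : G => Γ (x, 0)) p = Γ p)) :=
  ⟨fun _ hΛ => ⟨hΛ.starRep_postMul hn a, fun _ => by simp [starRep]⟩,
    fun _ hΓ => ⟨fun _ => map_f_of_postMul_hom P a hΓ hn, starRep_restrict P a hΓ hn⟩⟩
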